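/- Let Λ be a countable index set, (κ_λ)_{λ∈Λ} ∈ (0,∞)^Λ with sup_λ κ_λ < ∞, and let (φ_α)_{α>0} be a non-linear regularizing filter satisfying Assumption B. Let z ∈ ℓ²(Λ) be such that c⁺ := (z_λ/κ_λ)_λ ∈ ℓ²(Λ) and such that for some α̃ > 0 there exists w ∈ ℓ²(Λ) with φ_{α̃}(κ_λ, w_λ) = z_λ for all λ. Let (z^k)_k in ℓ²(Λ) satisfy ‖z^k − z‖_{ℓ²} ≤ δ_k, where δ_k → 0, α_k → 0 and there is a constant C > 0 with α_k ≥ C·δ_k² for all k. Then x^k := (φ_{α_k}(κ_λ, z^k_λ)/κ_λ)_λ converges weakly to c⁺ in ℓ²(Λ), i.e. ⟨x^k, w⟩ → ⟨c⁺, w⟩ for every w ∈ ℓ²(Λ). -/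

import Mathlib

/-!
Componentwise, (F2)–(F3) and (B2) give
`|x^k_λ| ≤ 2 |c⁺_λ| + (4 δ_k / (d α_k) + 2 e / √α_k) |z^k_λ - z_λ|`,
and the parameter choice `α_k ≥ C δ_k²` keeps the ℓ²-norm of the noise term bounded by
`4 / (d C) + 2 e / √C`. So `(x^k)` is bounded in ℓ², and it converges coordinatewise to `c⁺`
by (F2) and (F4). A bounded sequence in a Hilbert space whose inner products with each vector of
a Hilbert basis converge to those of `y` converges weakly to `y`.
-/

open scoped ENNReal RealInnerProductSpace
open Filter

noncomputable section

/-- A non-linear regularizing filter: `φ α κ` is (F1) monotone, (F2) nonexpansive,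
(F3) zero at zero, and (F4) converges pointwise to the identity as `α → 0`. -/
def IsRegFilter (φ : ℝ → ℝ → ℝ → ℝ) : Prop :=
  (∀ α > (0 : ℝ), ∀ κ > (0 : ℝ), Monotone (φ α κ)) ∧
  (∀ α > (0 : ℝ), ∀ κ > (0 : ℝ), ∀ x y : ℝ, |φ α κ x - φ α κ y| ≤ |x - y|) ∧
  (∀ α > (0 : ℝ), ∀ κ > (0 : ℝ), φ α κ 0 = 0) ∧
  (∀ κ > (0 : ℝ), ∀ c : ℝ,
    Tendsto (fun α => φ α κ c) (nhdsWithin 0 (Set.Ioi 0)) (nhds c))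

/-- Assumption B: (B1) `α ↦ |φ_α(κ,x)|` increases as `α` decreases, and (B2) there are
`d, e > 0` with `|φ_α(κ,x)| ≤ (eκ/√α)·|x|` whenever `|x| ≤ dα/κ`. -/
def AssumptionB (φ : ℝ → ℝ → ℝ → ℝ) : Prop :=
  (∀ κ > (0 : ℝ), ∀ x : ℝ, ∀ α β : ℝ, 0 < α → α ≤ β → |φ β κ x| ≤ |φ α κ x|) ∧
  (∃ d > (0 : ℝ), ∃ e > (0 : ℝ), ∀ κ > (0 : ℝ), ∀ α > (0 : ℝ), ∀ x : ℝ,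
    |x| ≤ d * α / κ → |φ α κ x| ≤ e * κ / Real.sqrt α * |x|)

open Topology

section
variable {𝕜 E ι α : Type*} [RCLike 𝕜] [NormedAddCommGroup E] [InnerProductSpace 𝕜 E]

/-- Uniform boundedness makes `w ↦ ⟪x k, w⟫` equicontinuous, so the vectors `w` along which
`⟪x k, w⟫ → ⟪y, w⟫` form a closed subspace; it contains the dense span of the basis. -/
theorem HilbertBasis.tendsto_inner_of_bounded_of_tendsto_inner (b : HilbertBasis ι 𝕜 E) {l : Filter α}
    {x : α → E} {y : E} {M : ℝ} (hM : ∀ k, ‖x k‖ ≤ M)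
    (hb : ∀ i, Tendsto (fun k => inner 𝕜 (x k) (b i)) l (𝓝 (inner 𝕜 y (b i)))) (w : E) :
    Tendsto (fun k => inner 𝕜 (x k) w) l (𝓝 (inner 𝕜 y w)) := by
  let S : Submodule 𝕜 E :=
    { carrier := {w | Tendsto (fun k => inner 𝕜 (x k) w) l (𝓝 (inner 𝕜 y w))}
      add_mem' := fun hv hw => by
        simpa only [Set.mem_ofPred_eq, inner_add_right] using hv.add hw
      zero_mem' := by
        simpa only [Set.mem_ofPred_eq, inner_zero_right] using tendsto_const_nhds
      smul_mem' := fun c w hw => by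
        simpa only [Set.mem_ofPred_eq, inner_smul_right] using hw.const_mul c }
  have hequi : Equicontinuous fun k (v : E) => inner 𝕜 (x k) v := by
    refine Metric.equicontinuous_of_continuity_modulus (fun t => M * t)
      (by simpa using (continuous_const_mul M).tendsto 0) _ fun v w k => ?_
    rw [dist_eq_norm, dist_eq_norm, ← inner_sub_right]
    exact (norm_inner_le_norm _ _).trans (by gcongr; exact hM k)
  have hclosed : IsClosed (S : Set E) :=
    hequi.isClosed_setOfPred_tendsto (continuous_const.inner continuous_id)
  have hspan : Submodule.span 𝕜 (Set.range b) ≤ S :=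
    Submodule.span_le.2 (Set.range_subset_iff.2 hb)
  have hw : w ∈ (Submodule.span 𝕜 (Set.range b)).topologicalClosure := by
    rw [b.dense_span]
    trivial
  exact Submodule.topologicalClosure_minimal _ hspan hclosed hw

theorem lp.tendsto_inner_of_bounded_of_tendsto_apply {l : Filter α} {x : α → lp (fun _ : ι => 𝕜) 2}
    {y : lp (fun _ : ι => 𝕜) 2} {M : ℝ} (hM : ∀ k, ‖x k‖ ≤ M)
    (hx : ∀ i, Tendsto (fun k => x k i) l (𝓝 (y i))) (w : lp (fun _ : ι => 𝕜) 2) :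
    Tendsto (fun k => inner 𝕜 (x k) w) l (𝓝 (inner 𝕜 y w)) := by
  classical
  refine (HilbertBasis.ofRepr (LinearIsometryEquiv.refl 𝕜 _)).tendsto_inner_of_bounded_of_tendsto_inner hM
    (fun i => ?_) w
  rw [← HilbertBasis.repr_symm_single]
  change Tendsto (fun k => inner 𝕜 (x k) (lp.single 2 i 1)) l
    (𝓝 (inner 𝕜 y (lp.single 2 i 1)))
  simp only [lp.inner_single_right]
  exact (hx i).inner tendsto_const_nhds

end

section
variable {ι : Type*} {E : ι → Type*} [∀ i, NormedAddCommGroup (E i)] {p : ℝ≥0∞}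

theorem Memℓp.of_norm_le_add {f u v : ∀ i, E i} (hu : Memℓp u p) (hv : Memℓp v p) {a b : ℝ}
    (h : ∀ i, ‖f i‖ ≤ a * ‖u i‖ + b * ‖v i‖) : Memℓp f p :=
  ((hu.norm.const_smul a).add (hv.norm.const_smul b)).mono h

theorem lp.norm_le_of_norm_le_add [Fact (1 ≤ p)] {f u v : lp E p} {a b : ℝ} (ha : 0 ≤ a)
    (hb : 0 ≤ b) (h : ∀ i, ‖f i‖ ≤ a * ‖u i‖ + b * ‖v i‖) : ‖f‖ ≤ a * ‖u‖ + b * ‖v‖ := by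
  have hp : p ≠ 0 := (zero_lt_one.trans_le Fact.out).ne'
  let U : lp (fun _ : ι => ℝ) p := ⟨fun i => ‖u i‖, (lp.memℓp u).norm⟩
  let V : lp (fun _ : ι => ℝ) p := ⟨fun i => ‖v i‖, (lp.memℓp v).norm⟩
  have hU : ‖U‖ ≤ ‖u‖ := lp.norm_mono hp fun i => (norm_norm (u i)).le
  have hV : ‖V‖ ≤ ‖v‖ := lp.norm_mono hp fun i => (norm_norm (v i)).le
  calc ‖f‖ ≤ ‖a • U + b • V‖ := lp.norm_mono hp fun i => (h i).trans (le_abs_self _)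
    _ ≤ a * ‖U‖ + b * ‖V‖ := by
      refine (norm_add_le _ _).trans ?_
      rw [norm_smul, norm_smul, Real.norm_of_nonneg ha, Real.norm_of_nonneg hb]
    _ ≤ a * ‖u‖ + b * ‖v‖ := by gcongr

end

namespace IsRegFilter
variable {φ : ℝ → ℝ → ℝ → ℝ}

theorem abs_le (hφ : IsRegFilter φ) {α κ : ℝ} (hα : 0 < α) (hκ : 0 < κ) (x : ℝ) :
    |φ α κ x| ≤ |x| := by
  simpa [hφ.2.2.1 α hα κ hκ] using hφ.2.1 α hα κ hκ x 0

theorem tendsto_apply (hφ : IsRegFilter φ) {κ : ℝ} (hκ : 0 < κ) {ι : Type*} {l : Filter ι}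
    {α y : ι → ℝ} {c : ℝ} (hα : Tendsto α l (𝓝[>] 0)) (hy : Tendsto y l (𝓝 c)) :
    Tendsto (fun k => φ (α k) κ (y k)) l (𝓝 c) := by
  have hc := (hφ.2.2.2 κ hκ c).comp hα
  rw [tendsto_iff_dist_tendsto_zero] at hy hc ⊢
  refine squeeze_zero' (Eventually.of_forall fun _ => dist_nonneg) ?_ (by simpa using hy.add hc)
  filter_upwards [hα self_mem_nhdsWithin] with k hk
  calc dist (φ (α k) κ (y k)) c
      ≤ dist (φ (α k) κ (y k)) (φ (α k) κ c) + dist (φ (α k) κ c) c := dist_triangle _ _ _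
    _ ≤ dist (y k) c + dist (φ (α k) κ c) c := by
      gcongr
      simpa only [Real.dist_eq] using hφ.2.1 (α k) hk κ hκ (y k) c

/-- Three regimes: if `|y - z| ≤ |z|` then `|φ y| ≤ |y| ≤ 2|z|`; otherwise `|y| ≤ 2|y - z|`, and
either `|y| ≤ dα/κ`, where (B2) applies, or `1 < κ|y|/(dα)`, which turns `|φ y| ≤ |y|` into
`|φ y| / κ ≤ |y|² / (dα) ≤ 4 δ |y - z| / (dα)`. -/
theorem abs_div_le (hφ : IsRegFilter φ) {d e : ℝ} (hd : 0 < d) (he : 0 ≤ e)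
    (hB2 : ∀ κ > (0 : ℝ), ∀ α > (0 : ℝ), ∀ x : ℝ,
      |x| ≤ d * α / κ → |φ α κ x| ≤ e * κ / Real.sqrt α * |x|)
    {α κ δ y z : ℝ} (hα : 0 < α) (hκ : 0 < κ) (hyz : |y - z| ≤ δ) :
    |φ α κ y / κ| ≤ 2 * |z / κ| + (4 * δ / (d * α) + 2 * e / Real.sqrt α) * |y - z| := by
  set n := |y - z|
  have hn : 0 ≤ n := abs_nonneg _
  have hsα : 0 < Real.sqrt α := Real.sqrt_pos.2 hα
  have hy : |y| ≤ |z| + n := by linarith [abs_sub_abs_le_abs_sub y z]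
  have hφy := hφ.abs_le hα hκ y
  have hquad : 0 ≤ 4 * δ / (d * α) * n := by
    have := hn.trans hyz
    positivity
  have hlin : 0 ≤ 2 * e / Real.sqrt α * n := by positivity
  rw [abs_div, abs_div, abs_of_pos hκ, add_mul]
  rcases le_or_gt n |z| with hnz | hzn
  · have : |φ α κ y| / κ ≤ 2 * (|z| / κ) := by
      rw [← mul_div_assoc]
      gcongr
      linarith
    linarith
  rcases le_or_gt |y| (d * α / κ) with hsmall | hlarge
  · have : |φ α κ y| / κ ≤ 2 * e / Real.sqrt α * n := by
      rw [div_le_iff₀ hκ]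
      calc |φ α κ y| ≤ e * κ / Real.sqrt α * |y| := hB2 κ hκ α hα y hsmall
        _ ≤ e * κ / Real.sqrt α * (2 * n) := by gcongr; linarith
        _ = 2 * e / Real.sqrt α * n * κ := by ring
    have : 0 ≤ 2 * (|z| / κ) := by positivity
    linarith
  · have hdα : d * α < |y| * κ := (div_lt_iff₀ hκ).1 hlarge
    have : |φ α κ y| / κ ≤ 4 * δ / (d * α) * n := by
      rw [div_le_iff₀ hκ, div_mul_eq_mul_div, div_mul_eq_mul_div, le_div_iff₀ (by positivity)]
      have hy2 : |y| ≤ 2 * n := by linarith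
      calc |φ α κ y| * (d * α) ≤ |y| * (|y| * κ) := by gcongr
        _ ≤ 2 * n * (2 * n * κ) := by gcongr
        _ = 4 * n * n * κ := by ring
        _ ≤ 4 * δ * n * κ := by gcongr
    have : 0 ≤ 2 * (|z| / κ) := by positivity
    linarith
end IsRegFilter

theorem noise_amplification_le {C α δ d e : ℝ} (hC : 0 < C) (hα : 0 < α) (hδ : 0 ≤ δ)
    (hd : 0 < d) (he : 0 ≤ e) (hCδ : C * δ ^ 2 ≤ α) :
    (4 * δ / (d * α) + 2 * e / Real.sqrt α) * δ ≤ 4 / (d * C) + 2 * e / Real.sqrt C := by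
  have hsq : δ ^ 2 / α ≤ 1 / C := by
    rw [div_le_div_iff₀ hα hC]; linarith
  have hsqrt : δ / Real.sqrt α ≤ 1 / Real.sqrt C := by
    rw [div_le_div_iff₀ (Real.sqrt_pos.2 hα) (Real.sqrt_pos.2 hC), one_mul,
      ← Real.sqrt_sq hδ, ← Real.sqrt_mul (sq_nonneg δ), mul_comm]
    exact Real.sqrt_le_sqrt hCδ
  calc (4 * δ / (d * α) + 2 * e / Real.sqrt α) * δ
      = 4 / d * (δ ^ 2 / α) + 2 * e * (δ / Real.sqrt α) := by ring
    _ ≤ 4 / d * (1 / C) + 2 * e * (1 / Real.sqrt C) := by gcongr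
    _ = 4 / (d * C) + 2 * e / Real.sqrt C := by ring

theorem statement9 {Λ : Type*}
    (κ : Λ → ℝ) (hκ : ∀ l, 0 < κ l)
    (φ : ℝ → ℝ → ℝ → ℝ) (hfilter : IsRegFilter φ) (hB : AssumptionB φ)
    (z : lp (fun _ : Λ => ℝ) 2)
    (hcplus : Memℓp (fun l => z l / κ l) 2)
    (zk : ℕ → lp (fun _ : Λ => ℝ) 2) (δ αs : ℕ → ℝ)
    (hαpos : ∀ k, 0 < αs k)
    (hzk : ∀ k, ‖zk k - z‖ ≤ δ k)
    (hδ0 : Tendsto δ atTop (nhds 0)) (hα0 : Tendsto αs atTop (nhds 0))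
    (C : ℝ) (hC : 0 < C) (hCδ : ∀ k, C * δ k ^ 2 ≤ αs k) :
    ∃ hxk : ∀ k, Memℓp (fun l => φ (αs k) (κ l) (zk k l) / κ l) 2,
      ∀ w : lp (fun _ : Λ => ℝ) 2,
        Tendsto
          (fun k =>
            ⟪(⟨fun l => φ (αs k) (κ l) (zk k l) / κ l, hxk k⟩ : lp (fun _ : Λ => ℝ) 2), w⟫)
          atTop
          (nhds ⟪(⟨fun l => z l / κ l, hcplus⟩ : lp (fun _ : Λ => ℝ) 2), w⟫) := by
  obtain ⟨-, d, hd, e, he, hB2⟩ := hB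
  have hδ (k : ℕ) : 0 ≤ δ k := (norm_nonneg _).trans (hzk k)
  have hcoord (k : ℕ) (l : Λ) : |zk k l - z l| ≤ δ k := by
    simpa [Real.norm_eq_abs] using (lp.norm_apply_le_norm two_ne_zero (zk k - z) l).trans (hzk k)
  have hbound (k : ℕ) (l : Λ) : ‖φ (αs k) (κ l) (zk k l) / κ l‖ ≤
      2 * ‖z l / κ l‖ + (4 * δ k / (d * αs k) + 2 * e / Real.sqrt (αs k)) * ‖(zk k - z) l‖ := by
    simpa only [Real.norm_eq_abs, lp.coeFn_sub, Pi.sub_apply] using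
      hfilter.abs_div_le hd he.le hB2 (hαpos k) (hκ l) (hcoord k l)
  have hxk (k : ℕ) : Memℓp (fun l => φ (αs k) (κ l) (zk k l) / κ l) 2 :=
    Memℓp.of_norm_le_add hcplus (lp.memℓp (zk k - z)) (hbound k)
  let c : lp (fun _ : Λ => ℝ) 2 := ⟨fun l => z l / κ l, hcplus⟩
  refine ⟨hxk, lp.tendsto_inner_of_bounded_of_tendsto_apply
    (M := 2 * ‖c‖ + (4 / (d * C) + 2 * e / Real.sqrt C)) (fun k => ?_) (fun l => ?_)⟩
  · have hcoeff : 0 ≤ 4 * δ k / (d * αs k) + 2 * e / Real.sqrt (αs k) := by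
      have := hαpos k
      have := hδ k
      positivity
    calc _ ≤ 2 * ‖c‖ + (4 * δ k / (d * αs k) + 2 * e / Real.sqrt (αs k)) * ‖zk k - z‖ :=
          lp.norm_le_of_norm_le_add zero_le_two hcoeff (hbound k)
      _ ≤ 2 * ‖c‖ + (4 * δ k / (d * αs k) + 2 * e / Real.sqrt (αs k)) * δ k := by
          gcongr
          exact hzk k
      _ ≤ _ := by
          gcongr
          exact noise_amplification_le hC (hαpos k) (hδ k) hd he.le (hCδ k)
  · have hα : Tendsto αs atTop (𝓝[>] 0) :=
      tendsto_nhdsWithin_iff.2 ⟨hα0, Eventually.of_forall hαpos⟩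
    have hz : Tendsto (fun k => zk k l) atTop (𝓝 (z l)) := by
      rw [tendsto_iff_dist_tendsto_zero]
      exact squeeze_zero (fun _ => dist_nonneg) (hcoord · l) hδ0
    exact (hfilter.tendsto_apply (hκ l) hα hz).div_const (κ l)
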